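/- arXiv:2004.04550 — 4 statements merged into one kernel-verified Lean document; each statement's English description precedes it below -/
import Mathlib

section
/- Fix integers l ≥ 1 and k with |k| > 1, and let G_P be the presented group with generators a₁, …, a_l, t and relators t aᵢ t⁻¹ aᵢ^{−k} for 1 ≤ i ≤ l together with the word a₁ a₂ ⋯ a_l. Then for every natural number n, the relation a₁^{kⁿ} a₂^{kⁿ} ⋯ a_l^{kⁿ} = 1 holds in G_P, where aᵢ denotes the image of the i-th generator in G_P. -/
/-!
Conjugation by `t` raises each `aᵢ` to the power `k`, so conjugation by `tⁿ` raises each `aᵢ` to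
the power `kⁿ`. Applying this automorphism to the relator `a₁ a₂ ⋯ a_l = 1` gives the claim.
-/

/-- The free-group generator corresponding to `aᵢ`. -/
def aGen (l : ℕ) (i : Fin l) : FreeGroup (Fin l ⊕ Unit) := FreeGroup.of (Sum.inl i)

/-- The free-group generator corresponding to the stable letter `t`. -/
def tGen (l : ℕ) : FreeGroup (Fin l ⊕ Unit) := FreeGroup.of (Sum.inr ())

/-- The relators `t aᵢ t⁻¹ aᵢ^{-k}` for `1 ≤ i ≤ l`, together with `a₁ a₂ ⋯ a_l`. -/
def relsGP (l : ℕ) (k : ℤ) : Set (FreeGroup (Fin l ⊕ Unit)) :=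
  {r | (∃ i : Fin l, r = tGen l * aGen l i * (tGen l)⁻¹ * (aGen l i) ^ (-k)) ∨
    r = (List.ofFn fun i : Fin l => aGen l i).prod}

/-- The group `G_P` presented with generators `a₁, …, a_l, t` and relators
`t aᵢ t⁻¹ aᵢ^{-k}` (`1 ≤ i ≤ l`) and `a₁ a₂ ⋯ a_l`. -/
abbrev GP (l : ℕ) (k : ℤ) := PresentedGroup (relsGP l k)

section Conjugation

variable {G : Type*} [Group G] {t x : G} {k : ℤ}

theorem pow_mul_mul_inv_pow_eq_zpow_pow (h : t * x * t⁻¹ = x ^ k) (n : ℕ) :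
    t ^ n * x * (t ^ n)⁻¹ = x ^ (k ^ n) := by
  induction n with
  | zero => simp
  | succ n ih =>
    calc t ^ (n + 1) * x * (t ^ (n + 1))⁻¹ = t * (t ^ n * x * (t ^ n)⁻¹) * t⁻¹ := by group
      _ = (t * x * t⁻¹) ^ (k ^ n) := by rw [ih, conj_zpow]
      _ = x ^ (k ^ (n + 1)) := by rw [h, ← zpow_mul, pow_succ']

theorem List.prod_map_zpow_pow_eq_one {L : List G} (hL : ∀ x ∈ L, t * x * t⁻¹ = x ^ k)
    (hprod : L.prod = 1) (n : ℕ) : (L.map (· ^ (k ^ n))).prod = 1 := by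
  have hmap : L.map (· ^ (k ^ n)) = L.map (MulAut.conj (t ^ n)) :=
    List.map_congr_left fun x hx => (pow_mul_mul_inv_pow_eq_zpow_pow (hL x hx) n).symm
  rw [hmap, ← map_list_prod, hprod, map_one]

end Conjugation

namespace GP

variable {l : ℕ} {k : ℤ}

theorem conj_of_inl (i : Fin l) :
    PresentedGroup.of (rels := relsGP l k) (Sum.inr ()) * PresentedGroup.of (Sum.inl i) *
      (PresentedGroup.of (Sum.inr ()))⁻¹ = PresentedGroup.of (Sum.inl i) ^ k :=
  PresentedGroup.mk_eq_mk_of_mul_inv_mem (x := tGen l * aGen l i * (tGen l)⁻¹)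
    (y := aGen l i ^ k) (Or.inl ⟨i, by rw [← zpow_neg]⟩)

theorem prod_ofFn_of_inl :
    (List.ofFn fun i : Fin l => PresentedGroup.of (rels := relsGP l k) (Sum.inl i)).prod = 1 := by
  have h := PresentedGroup.one_of_mem (rels := relsGP l k) (Or.inr rfl)
  rwa [map_list_prod, List.map_ofFn] at h

end GP

theorem GP_prod_pow_eq_one_general (l : ℕ) (k : ℤ) (n : ℕ) :
    (List.ofFn fun i : Fin l =>
      (PresentedGroup.of (rels := relsGP l k) (Sum.inl i)) ^ (k ^ n)).prod = 1 := by
  have h := List.prod_map_zpow_pow_eq_one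
    (t := PresentedGroup.of (rels := relsGP l k) (Sum.inr ()))
    (by simpa only [List.forall_mem_ofFn_iff] using GP.conj_of_inl) GP.prod_ofFn_of_inl n
  rwa [List.map_ofFn] at h

/-- In `G_P`, the relation `a₁^{kⁿ} a₂^{kⁿ} ⋯ a_l^{kⁿ} = 1` holds for every natural `n`. -/
theorem GP_prod_pow_eq_one (l : ℕ) (hl : 1 ≤ l) (k : ℤ) (hk : 1 < |k|) (n : ℕ) :
    (List.ofFn fun i : Fin l =>
      (PresentedGroup.of (rels := relsGP l k) (Sum.inl i)) ^ (k ^ n)).prod = 1 :=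
  GP_prod_pow_eq_one_general l k n
end

section
/- Fix integers l ≥ 1 and k with |k| > 1. Let H_P be the presented group with generators a₁, …, a_l and relators the words a₁^{kⁿ} a₂^{kⁿ} ⋯ a_l^{kⁿ} for every natural number n, and let G_P be the presented group with generators a₁, …, a_l, t and relators t aᵢ t⁻¹ aᵢ^{−k} for 1 ≤ i ≤ l together with the word a₁ a₂ ⋯ a_l. Then there exists a group homomorphism ψ : H_P → G_P sending the image of the i-th generator of H_P to the image of the i-th generator aᵢ of G_P, for every i with 1 ≤ i ≤ l. -/
/-!
In `G_P`, conjugation by `tⁿ` raises every `aᵢ` to the power `kⁿ`, so it carries the relator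
`a₁ ⋯ a_l` to `a₁^{kⁿ} ⋯ a_l^{kⁿ}`. Hence every relator of `H_P` already holds among the `aᵢ`
in `G_P`, and `aᵢ ↦ aᵢ` extends to a homomorphism.
-/

/-- The relators `a₁^{kⁿ} a₂^{kⁿ} ⋯ a_l^{kⁿ}` for all natural numbers `n`. -/
def relsHP (l : ℕ) (k : ℤ) : Set (FreeGroup (Fin l)) :=
  {r | ∃ n : ℕ, r = (List.ofFn fun i : Fin l => (FreeGroup.of i) ^ (k ^ n)).prod}

/-- The group `H_P` presented with generators `a₁, …, a_l` and relators
`a₁^{kⁿ} a₂^{kⁿ} ⋯ a_l^{kⁿ}` for all natural numbers `n`. -/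
abbrev HP (l : ℕ) (k : ℤ) := PresentedGroup (relsHP l k)

section ConjPow

variable {G : Type*} [Group G] {t : G} {k : ℤ}

theorem conj_pow_eq_zpow_pow {a : G} (h : t * a * t⁻¹ = a ^ k) (n : ℕ) :
    t ^ n * a * (t ^ n)⁻¹ = a ^ (k ^ n) := by
  induction n with
  | zero => simp
  | succ n ih =>
    calc t ^ (n + 1) * a * (t ^ (n + 1))⁻¹ = t * (t ^ n * a * (t ^ n)⁻¹) * t⁻¹ := by group
      _ = (t * a * t⁻¹) ^ (k ^ n) := by rw [ih, conj_zpow]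
      _ = a ^ (k ^ (n + 1)) := by rw [h, ← zpow_mul, pow_succ']

theorem list_prod_map_zpow_pow_eq_conj {L : List G} (h : ∀ a ∈ L, t * a * t⁻¹ = a ^ k)
    (n : ℕ) : (L.map (· ^ (k ^ n))).prod = t ^ n * L.prod * (t ^ n)⁻¹ := by
  rw [← MulAut.conj_apply, map_list_prod]
  congr 1
  refine List.map_congr_left fun a ha => ?_
  rw [MulAut.conj_apply, conj_pow_eq_zpow_pow (h a ha)]

end ConjPow

namespace GP

variable (l : ℕ) (k : ℤ)

def a (i : Fin l) : GP l k := PresentedGroup.of (Sum.inl i)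

def t : GP l k := PresentedGroup.of (Sum.inr ())

theorem t_mul_a_mul_t_inv (i : Fin l) : t l k * a l k i * (t l k)⁻¹ = a l k i ^ k := by
  rw [← mul_inv_eq_one, ← zpow_neg]
  exact PresentedGroup.one_of_mem (Or.inl ⟨i, rfl⟩)

theorem prod_ofFn_a : (List.ofFn (a l k)).prod = 1 := by
  rw [← PresentedGroup.one_of_mem (rels := relsGP l k) (Or.inr rfl), map_list_prod,
    List.map_ofFn]
  rfl

theorem prod_ofFn_a_zpow_pow (n : ℕ) : (List.ofFn fun i => a l k i ^ (k ^ n)).prod = 1 := by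
  have h := list_prod_map_zpow_pow_eq_conj (L := List.ofFn (a l k))
    (List.forall_mem_ofFn_iff.mpr (t_mul_a_mul_t_inv l k)) n
  rwa [prod_ofFn_a, mul_one, mul_inv_cancel, List.map_ofFn] at h

end GP

theorem HP_to_GP_exists_hom_general (l : ℕ) (k : ℤ) :
    ∃ ψ : HP l k →* GP l k, ∀ i : Fin l,
      ψ (PresentedGroup.of (rels := relsHP l k) i) =
        PresentedGroup.of (rels := relsGP l k) (Sum.inl i) := by
  have hrels : ∀ r ∈ relsHP l k, FreeGroup.lift (GP.a l k) r = 1 := by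
    rintro r ⟨n, rfl⟩
    simpa [map_list_prod, List.map_ofFn, Function.comp_def] using GP.prod_ofFn_a_zpow_pow l k n
  exact ⟨PresentedGroup.toGroup hrels, fun i => PresentedGroup.toGroup.of hrels⟩

/-- There is a homomorphism `ψ : H_P → G_P` sending the image of the `i`-th generator of
`H_P` to the image of the generator `aᵢ` of `G_P`, for every `i`. -/
theorem HP_to_GP_exists_hom (l : ℕ) (hl : 1 ≤ l) (k : ℤ) (hk : 1 < |k|) :
    ∃ ψ : HP l k →* GP l k, ∀ i : Fin l,
      ψ (PresentedGroup.of (rels := relsHP l k) i) =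
        PresentedGroup.of (rels := relsGP l k) (Sum.inl i) :=
  HP_to_GP_exists_hom_general l k
end

section
/- Let q be a prime power and let F be a finite field with q elements. Then PGL₂(F) contains an element of order q − 1 and an element of order q + 1. -/
/-!
A `K`-algebra `E` represented faithfully by matrices over `K` has its units mapped into `GL`, and
a unit becomes central there exactly when it lies in `Kˣ`; so `Eˣ ⧸ Kˣ` embeds into `PGL`.
For `E = K × K` (diagonal matrices) `a ↦ diag(a, 1)` embeds the cyclic group `Kˣ` of order
`q - 1`. For `E` the quadratic extension of `K`, acting on itself by left multiplication, the
quotient `Eˣ ⧸ Kˣ` of the cyclic group `Eˣ` is cyclic of order `(q² - 1) / (q - 1) = q + 1`.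
-/

open Matrix

abbrev PGL2 (F : Type*) [Field F] := GL (Fin 2) F ⧸ Subgroup.center (GL (Fin 2) F)

section

variable {K E n : Type*} [CommRing K] [Ring E] [Algebra K E] [Fintype n] [DecidableEq n]

def AlgHom.unitsToPGL (φ : E →ₐ[K] Matrix n n K) : Eˣ →* GL n K ⧸ Subgroup.center (GL n K) :=
  (QuotientGroup.mk' _).comp (Units.map φ)

theorem AlgHom.ker_unitsToPGL {φ : E →ₐ[K] Matrix n n K} (hφ : Function.Injective φ) :
    φ.unitsToPGL.ker = (Units.map (algebraMap K E : K →* E)).range := by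
  ext α
  simp only [MonoidHom.mem_ker, unitsToPGL, MonoidHom.comp_apply, QuotientGroup.mk'_apply,
    QuotientGroup.eq_one_iff, GeneralLinearGroup.center_eq_range_scalar, MonoidHom.mem_range]
  refine exists_congr fun u => ?_
  rw [Units.ext_iff, Units.ext_iff, GeneralLinearGroup.coe_scalar, Units.coe_map, Units.coe_map]
  change algebraMap K (Matrix n n K) u = φ α ↔ _
  rw [← φ.commutes, hφ.eq_iff]
  rfl

end

theorem injective_unitsToPGL_diagonal_comp_mulSingle {K n : Type*} [CommRing K] [Fintype n]
    [DecidableEq n] [Nontrivial n] (i : n) :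
    Function.Injective ((diagonalAlgHom K).unitsToPGL.comp
      (Units.map (MonoidHom.mulSingle (fun _ : n => K) i))) := by
  rw [← MonoidHom.ker_eq_bot_iff, eq_bot_iff]
  intro a ha
  rw [MonoidHom.mem_ker, MonoidHom.comp_apply, ← MonoidHom.mem_ker,
    AlgHom.ker_unitsToPGL diagonal_injective] at ha
  obtain ⟨c, hc⟩ := ha
  obtain ⟨j, hji⟩ := exists_ne i
  have hi : (c : K) = a := by simpa using congrFun (congrArg Units.val hc) i
  have hj : c = 1 := by simpa [hji] using congrFun (congrArg Units.val hc) j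
  rw [Subgroup.mem_bot, ← Units.ext hi, hj]

theorem exists_orderOf_PGL_eq_card_sub_one (K n : Type*) [Field K] [Finite K] [Fintype n]
    [DecidableEq n] [Nontrivial n] :
    ∃ x : GL n K ⧸ Subgroup.center (GL n K), orderOf x = Nat.card K - 1 := by
  obtain ⟨a, ha⟩ := IsCyclic.exists_ofOrder_eq_natCard (α := Kˣ)
  obtain ⟨i⟩ : Nonempty n := inferInstance
  exact ⟨_, (orderOf_injective _ (injective_unitsToPGL_diagonal_comp_mulSingle i) a).trans
    (ha.trans (Nat.card_units K))⟩

theorem exists_orderOf_PGL_mul_card_sub_one_eq {K E ι : Type*} [Field K] [Field E] [Finite E]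
    [Algebra K E] [Fintype ι] [DecidableEq ι] (b : Module.Basis ι K E) :
    ∃ x : GL ι K ⧸ Subgroup.center (GL ι K), orderOf x * (Nat.card K - 1) = Nat.card E - 1 := by
  set f := (Algebra.leftMulMatrix b).unitsToPGL
  have : IsCyclic (Eˣ ⧸ f.ker) := isCyclic_of_surjective _ (QuotientGroup.mk'_surjective _)
  obtain ⟨g, hg⟩ := IsCyclic.exists_ofOrder_eq_natCard (α := Eˣ ⧸ f.ker)
  have hker : Nat.card f.ker = Nat.card K - 1 := by
    rw [AlgHom.ker_unitsToPGL (Algebra.leftMulMatrix_injective b), ← Nat.card_units K]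
    exact Nat.card_congr (MonoidHom.ofInjective
      (Units.map_injective (algebraMap K E).injective)).toEquiv.symm
  refine ⟨QuotientGroup.kerLift f g, ?_⟩
  rw [orderOf_injective _ (QuotientGroup.kerLift_injective f), hg, ← hker, ← Nat.card_units E,
    ← Subgroup.card_eq_card_quotient_mul_card_subgroup]

theorem PGL2_exists_elements_of_order_general (q : ℕ)
    (F : Type*) [Field F] [Fintype F] (hF : Fintype.card F = q) :
    (∃ x : PGL2 F, orderOf x = q - 1) ∧ (∃ y : PGL2 F, orderOf y = q + 1) := by
  rw [← Nat.card_eq_fintype_card] at hF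
  subst hF
  refine ⟨exists_orderOf_PGL_eq_card_sub_one F (Fin 2), ?_⟩
  obtain ⟨p, _⟩ := CharP.exists F
  have : Fact p.Prime := ⟨CharP.char_is_prime F p⟩
  obtain ⟨y, hy⟩ := exists_orderOf_PGL_mul_card_sub_one_eq
    (Module.finBasisOfFinrankEq F _ (FiniteField.finrank_extension F p 2))
  refine ⟨y, Nat.eq_of_mul_eq_mul_right (Nat.sub_pos_of_lt (Finite.one_lt_card (α := F))) ?_⟩
  rw [hy, FiniteField.natCard_extension, ← Nat.sq_sub_sq, one_pow]

/-- If `F` is a finite field with `q` elements (`q` a prime power), then `PGL₂(F)` contains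
an element of order `q - 1` and an element of order `q + 1`. -/
theorem PGL2_exists_elements_of_order (q : ℕ) (hq : IsPrimePow q)
    (F : Type*) [Field F] [Fintype F] (hF : Fintype.card F = q) :
    (∃ x : PGL2 F, orderOf x = q - 1) ∧ (∃ y : PGL2 F, orderOf y = q + 1) :=
  PGL2_exists_elements_of_order_general q F hF
end

section
/- Let q be a prime power, let F be a finite field with q elements, fix ε ∈ {1, −1} and an integer d ≥ 3 such that d divides q + ε, let A ∈ GL₂(F) be a matrix whose image in PGL₂(F) has order d, and let σ be the permutation of the projective line ℙ¹(F) induced by A. Then σ has exactly 1 − ε fixed points (that is, 2 fixed points if ε = −1 and none if ε = 1), every point of ℙ¹(F) that is not fixed by σ has minimal period exactly d under σ, and the number of σ-orbits of size d is (q + ε)/d. -/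
/-- The map induced on the projective line `ℙ¹(F)` by an invertible matrix `A ∈ GL₂(F)`,
given by applying the associated linear automorphism to representative vectors. -/
noncomputable def projAction {F : Type*} [Field F] (A : GL (Fin 2) F) :
    Projectivization F (Fin 2 → F) → Projectivization F (Fin 2 → F) :=
  Projectivization.map
    ((LinearMap.GeneralLinearGroup.generalLinearEquiv F (Fin 2 → F)
      (Matrix.GeneralLinearGroup.toLin A)) : (Fin 2 → F) →ₗ[F] (Fin 2 → F))
    (LinearMap.GeneralLinearGroup.generalLinearEquiv F (Fin 2 → F)
      (Matrix.GeneralLinearGroup.toLin A)).injective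

/-! The fixed points of `g ∈ GL₂(F)` on `ℙ¹(F)` are its eigenlines. Two independent eigenvectors
with a common eigenvalue force `g` to be scalar; since eigenvectors for three distinct eigenvalues
cannot be independent in dimension two, a non-scalar `g` fixes at most two points.
If `Aᵐ` fixes a point `x` not fixed by `A`, then `x` and `A x` are independent eigenvectors of `Aᵐ`
with the same eigenvalue (as `A` commutes with `Aᵐ`), so `Aᵐ` is scalar: every moved point has
period exactly the order `d` of `A` in `PGL₂(F)`. Hence `q + 1 = #fixed + d · #orbits`, and
`#fixed ≤ 2 < d` together with `#fixed ≡ q + 1 ≡ 1 - ε (mod d)` gives `#fixed = 1 - ε`. -/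

open scoped LinearAlgebra.Projectivization
open Projectivization Function Finset

def ActsByScalar (K V : Type*) {G : Type*} [SMul K V] [SMul G V] (g : G) : Prop :=
  ∃ a : K, ∀ v : V, g • v = a • v

namespace Module.End

variable {K V : Type*} [Field K] [AddCommGroup V] [Module K V]

theorem eq_smul_one_of_linearIndependent_pair (hV : Module.finrank K V = 2) {f : Module.End K V}
    {a : K} {v w : V} (hvw : LinearIndependent K ![v, w]) (hv : f v = a • v) (hw : f w = a • w) :
    f = a • 1 := by
  let b := basisOfLinearIndependentOfCardEqFinrank hvw (by simp [hV])
  refine b.ext fun i => ?_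
  fin_cases i <;> simp [b, hv, hw]

end Module.End

namespace Projectivization

variable {G K V : Type*} [Field K] [AddCommGroup V] [Module K V]
  [Group G] [DistribMulAction G V] [SMulCommClass G K V]

theorem smul_eq_self_iff (g : G) (x : ℙ K V) : g • x = x ↔ ∃ a : K, g • x.rep = a • x.rep := by
  conv_lhs => rw [← mk_rep x]
  rw [smul_mk, mk_eq_mk_iff']
  exact exists_congr fun a => eq_comm

theorem linearIndependent_pair_of_mk_ne {v w : V} (hv : v ≠ 0) (hw : w ≠ 0)
    (hvw : mk K v hv ≠ mk K w hw) : LinearIndependent K ![v, w] := by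
  rw [LinearIndependent.pair_iff' hv]
  rintro a rfl
  exact hvw ((mk_eq_mk_iff' K _ _ hw hv).mpr ⟨a, rfl⟩).symm

theorem actsByScalar_of_fixed_pair (hV : Module.finrank K V = 2) {h : G} {a : K} {v w : V}
    (hvw : LinearIndependent K ![v, w]) (hv : h • v = a • v) (hw : h • w = a • w) :
    ActsByScalar K V h :=
  ⟨a, LinearMap.congr_fun <| Module.End.eq_smul_one_of_linearIndependent_pair
    (f := DistribSMul.toLinearMap K V h) hV hvw hv hw⟩

theorem actsByScalar_of_commute_of_smul_eq_self (hV : Module.finrank K V = 2) {g h : G}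
    (hgh : Commute g h) {x : ℙ K V} (hhx : h • x = x) (hgx : g • x ≠ x) :
    ActsByScalar K V h := by
  obtain ⟨a, ha⟩ := (smul_eq_self_iff h x).mp hhx
  have hne : mk K x.rep x.rep_nonzero ≠
      mk K (g • x.rep) (smul_ne_zero_iff_ne g |>.mpr x.rep_nonzero) := by
    rw [← smul_mk g x.rep_nonzero, mk_rep]
    exact Ne.symm hgx
  refine actsByScalar_of_fixed_pair hV (linearIndependent_pair_of_mk_ne _ _ hne) ha ?_
  rw [← mul_smul, ← hgh.eq, mul_smul, ha, smul_comm]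

theorem actsByScalar_of_three_fixed (hV : Module.finrank K V = 2) {h : G} {x y z : ℙ K V}
    (hxy : x ≠ y) (hxz : x ≠ z) (hyz : y ≠ z) (hx : h • x = x) (hy : h • y = y) (hz : h • z = z) :
    ActsByScalar K V h := by
  obtain ⟨a, ha⟩ := (smul_eq_self_iff h x).mp hx
  obtain ⟨b, hb⟩ := (smul_eq_self_iff h y).mp hy
  obtain ⟨c, hc⟩ := (smul_eq_self_iff h z).mp hz
  by_contra hns
  have distinct {p p' : ℙ K V} {μ μ' : K} (hp : p ≠ p') (hμ : h • p.rep = μ • p.rep)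
      (hμ' : h • p'.rep = μ' • p'.rep) : μ ≠ μ' := by
    rintro rfl
    exact hns (actsByScalar_of_fixed_pair hV (linearIndependent_pair_iff_ne.mpr hp) hμ hμ')
  have hab := distinct hxy ha hb
  have hac := distinct hxz ha hc
  have hbc := distinct hyz hb hc
  have : Module.Finite K V := Module.finite_of_finrank_eq_succ hV
  have hli := Module.End.eigenvectors_linearIndependent' (DistribSMul.toLinearMap K V h) ![a, b, c]
    (by intro i j; fin_cases i <;> fin_cases j <;> simp [hab, hac, hbc, hab.symm, hac.symm, hbc.symm])
    ![x.rep, y.rep, z.rep] (by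
      intro i
      fin_cases i <;> simp [Module.End.hasEigenvector_iff, ha, hb, hc, rep_nonzero])
  simpa [hV] using hli.fintype_card_le_finrank

theorem card_fixedPoints_le_two (hV : Module.finrank K V = 2) {h : G} (hh : ¬ActsByScalar K V h) :
    Nat.card {x : ℙ K V // h • x = x} ≤ 2 := by
  by_contra! hcard
  have : Finite {x : ℙ K V // h • x = x} := Nat.finite_of_card_ne_zero (by omega)
  have := Fintype.ofFinite {x : ℙ K V // h • x = x}
  rw [Nat.card_eq_fintype_card] at hcard
  obtain ⟨x, y, z, hxy, hxz, hyz⟩ := Fintype.two_lt_card_iff.mp hcard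
  exact hh (actsByScalar_of_three_fixed hV (Subtype.coe_ne_coe.mpr hxy) (Subtype.coe_ne_coe.mpr hxz)
    (Subtype.coe_ne_coe.mpr hyz) x.2 y.2 z.2)

end Projectivization

namespace Matrix.GeneralLinearGroup

variable {n R : Type*} [Fintype n] [DecidableEq n] [CommRing R]

theorem mem_center_iff_actsByScalar {g : GL n R} :
    g ∈ Subgroup.center (GL n R) ↔ ActsByScalar R (n → R) g := by
  rw [mem_center_iff_val_mem_range_scalar]
  refine exists_congr fun a => ?_
  rw [eq_comm, Matrix.ext_iff_mulVec]
  simp [Units.smul_def]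

end Matrix.GeneralLinearGroup

section PGL2

variable {K : Type*} [Field K]

theorem projAction_eq_smul (A : GL (Fin 2) K) : projAction A = (A • ·) := by
  funext x
  induction x using Projectivization.ind with | h v hv => rfl

theorem pow_smul_eq_self_iff_orderOf_dvd (A : GL (Fin 2) K) {x : ℙ K (Fin 2 → K)} (hx : A • x ≠ x)
    (m : ℕ) : (A ^ m) • x = x ↔ orderOf (QuotientGroup.mk A : PGL2 K) ∣ m := by
  rw [orderOf_dvd_iff_pow_eq_one, ← QuotientGroup.mk_pow, QuotientGroup.eq_one_iff,
    Matrix.GeneralLinearGroup.mem_center_iff_actsByScalar]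
  refine ⟨fun h => actsByScalar_of_commute_of_smul_eq_self (by simp) (Commute.self_pow A m) h hx,
    fun ⟨a, ha⟩ => (smul_eq_self_iff _ x).mpr ⟨a, ha _⟩⟩

theorem period_eq_orderOf_mk (A : GL (Fin 2) K) {x : ℙ K (Fin 2 → K)} (hx : A • x ≠ x) :
    MulAction.period A x = orderOf (QuotientGroup.mk A : PGL2 K) :=
  eq_of_forall_dvd fun m => by
    rw [← MulAction.pow_smul_eq_iff_period_dvd, pow_smul_eq_self_iff_orderOf_dvd A hx]

end PGL2

namespace Equiv.Perm

variable {α : Type*} (σ : Perm α)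

theorem card_range_zpow_apply [Finite α] (x : α) :
    Nat.card (Set.range fun n : ℤ => (σ ^ n) x) = minimalPeriod σ x := by
  have horbit : MulAction.orbit (Subgroup.zpowers σ) x = Set.range fun n : ℤ => (σ ^ n) x := by
    ext y
    simp [MulAction.mem_orbit_iff, Subgroup.smul_def, Equiv.Perm.smul_def]
  have := Fintype.ofFinite α
  classical
  rw [← horbit, Nat.card_eq_fintype_card, ← MulAction.minimalPeriod_eq_card]
  rfl

theorem range_zpow_apply_eq_of_mem {x y : α} (h : y ∈ Set.range fun n : ℤ => (σ ^ n) x) :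
    (Set.range fun n : ℤ => (σ ^ n) y) = Set.range fun n : ℤ => (σ ^ n) x :=
  Set.ext fun _ => ⟨SameCycle.trans h, SameCycle.trans (SameCycle.symm h)⟩

theorem card_fixed_add_card_orbits_mul [Finite α] {d : ℕ} (hd : d ≠ 1)
    (hperiod : ∀ x, σ x ≠ x → minimalPeriod σ x = d) :
    Nat.card {x // σ x = x} +
        Nat.card {s : Set α // (∃ x, s = Set.range fun n : ℤ => (σ ^ n) x) ∧ Nat.card s = d} * d =
      Nat.card α := by
  classical
  have := Fintype.ofFinite α
  set orbit : α → Set α := fun x => Set.range fun n : ℤ => (σ ^ n) x with horbit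
  let moved : Finset α := {x | σ x ≠ x}
  have horbits : Nat.card {s : Set α // (∃ x, s = orbit x) ∧ Nat.card s = d} =
      #(moved.image orbit) := by
    rw [← Set.ncard_coe_finset, ← Nat.card_coe_set_eq]
    refine Nat.card_congr (Equiv.subtypeEquivRight fun s => ?_)
    simp only [coe_image, Set.mem_image, coe_filter, mem_univ, true_and,
      Set.mem_ofPred_eq, moved]
    constructor
    · rintro ⟨⟨x, rfl⟩, hx⟩
      refine ⟨x, fun hfix => hd ?_, rfl⟩
      rw [← hx, horbit, card_range_zpow_apply, minimalPeriod_eq_one_iff_isFixedPt.mpr hfix]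
    · rintro ⟨x, hx, rfl⟩
      exact ⟨⟨x, rfl⟩, (card_range_zpow_apply σ x).trans (hperiod x hx)⟩
  have hfiber : ∀ s ∈ moved.image orbit, #{x ∈ moved | orbit x = s} = d := by
    simp only [forall_mem_image]
    intro x hx
    have : {y ∈ moved | orbit y = orbit x} = (orbit x).toFinset := by
      ext y
      simp only [mem_filter, mem_univ, true_and, Set.mem_toFinset, moved]
      refine ⟨fun ⟨_, hy⟩ => hy ▸ ⟨0, rfl⟩, fun hy => ⟨?_, range_zpow_apply_eq_of_mem σ hy⟩⟩
      exact (SameCycle.apply_eq_self_iff hy).not.mp (mem_filter.mp hx).2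
    rw [this, Set.toFinset_card, ← Nat.card_eq_fintype_card, horbit, card_range_zpow_apply,
      hperiod x (mem_filter.mp hx).2]
  have hmoved : #moved = #(moved.image orbit) * d :=
    (card_eq_sum_card_fiberwise fun x hx => mem_image_of_mem orbit hx).trans (sum_const_nat hfiber)
  rw [horbits, ← hmoved, Nat.card_eq_fintype_card, Fintype.card_subtype,
    Nat.card_eq_fintype_card]
  exact card_filter_add_card_filter_not _

end Equiv.Perm

theorem PGL2_orbit_structure_on_projective_line_general (q : ℕ)
    (F : Type*) [Field F] [Fintype F] (hF : Fintype.card F = q)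
    (ε : ℤ) (hε : ε = 1 ∨ ε = -1) (d : ℕ) (hd : 3 ≤ d) (hdvd : (d : ℤ) ∣ (q : ℤ) + ε)
    (A : GL (Fin 2) F) (hA : orderOf (QuotientGroup.mk A : PGL2 F) = d)
    (σ : Equiv.Perm (Projectivization F (Fin 2 → F)))
    (hσ : ∀ x : Projectivization F (Fin 2 → F), σ x = projAction A x) :
    (Nat.card {x : Projectivization F (Fin 2 → F) // σ x = x} : ℤ) = 1 - ε ∧
    (∀ x : Projectivization F (Fin 2 → F), σ x ≠ x →
      Function.minimalPeriod (⇑σ) x = d) ∧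
    (Nat.card {s : Set (Projectivization F (Fin 2 → F)) //
        (∃ x, s = Set.range fun n : ℤ => (σ ^ n) x) ∧ Nat.card s = d} : ℤ) * (d : ℤ) =
      (q : ℤ) + ε := by
  have hσA : ⇑σ = (A • ·) := funext fun x => (hσ x).trans (congrFun (projAction_eq_smul A) x)
  have hperiod : ∀ x, σ x ≠ x → minimalPeriod σ x = d := by
    intro x hx
    rw [hσA] at hx ⊢
    rw [← MulAction.period_eq_minimalPeriod, period_eq_orderOf_mk A hx, hA]
  have hfixed : Nat.card {x // σ x = x} ≤ 2 := by
    simp only [hσA]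
    refine card_fixedPoints_le_two (by simp) fun hscalar => ?_
    rw [← Matrix.GeneralLinearGroup.mem_center_iff_actsByScalar, ← QuotientGroup.eq_one_iff] at hscalar
    rw [hscalar, orderOf_one] at hA
    omega
  have hcount := σ.card_fixed_add_card_orbits_mul (by omega) hperiod
  rw [card_of_finrank_two F (Fin 2 → F) (by simp), Nat.card_eq_fintype_card (α := F), hF] at hcount
  generalize Nat.card {x // σ x = x} = f at hfixed hcount ⊢
  generalize Nat.card {s : Set (ℙ F (Fin 2 → F)) // _} = t at hcount ⊢
  have hcountZ : (f : ℤ) + t * d = q + 1 := by exact_mod_cast hcount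
  have hfixed_eq : (f : ℤ) = 1 - ε := by
    obtain ⟨k, hk⟩ := hdvd
    have hdvd' : (d : ℤ) ∣ f - (1 - ε) := ⟨k - t, by linear_combination hcountZ + hk⟩
    have := Int.eq_zero_of_abs_lt_dvd hdvd' (by rw [abs_lt]; omega)
    linarith
  exact ⟨hfixed_eq, hperiod, by linarith⟩

/-- Let `F` be a finite field with `q` elements (`q` a prime power), `ε = ±1`, `d ≥ 3` with
`d ∣ q + ε`, and let `A ∈ GL₂(F)` be a matrix whose image in `PGL₂(F)` has order `d`.  Then
the permutation `σ` of the projective line induced by `A` has exactly `1 - ε` fixed points,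
every non-fixed point has minimal period exactly `d` under `σ`, and the number of `σ`-orbits
of size `d` is `(q + ε) / d`. -/
theorem PGL2_orbit_structure_on_projective_line (q : ℕ) (hq : IsPrimePow q)
    (F : Type*) [Field F] [Fintype F] (hF : Fintype.card F = q)
    (ε : ℤ) (hε : ε = 1 ∨ ε = -1) (d : ℕ) (hd : 3 ≤ d) (hdvd : (d : ℤ) ∣ (q : ℤ) + ε)
    (A : GL (Fin 2) F) (hA : orderOf (QuotientGroup.mk A : PGL2 F) = d)
    (σ : Equiv.Perm (Projectivization F (Fin 2 → F)))
    (hσ : ∀ x : Projectivization F (Fin 2 → F), σ x = projAction A x) :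
    (Nat.card {x : Projectivization F (Fin 2 → F) // σ x = x} : ℤ) = 1 - ε ∧
    (∀ x : Projectivization F (Fin 2 → F), σ x ≠ x →
      Function.minimalPeriod (⇑σ) x = d) ∧
    (Nat.card {s : Set (Projectivization F (Fin 2 → F)) //
        (∃ x, s = Set.range fun n : ℤ => (σ ^ n) x) ∧ Nat.card s = d} : ℤ) * (d : ℤ) =
      (q : ℤ) + ε :=
  PGL2_orbit_structure_on_projective_line_general q F hF ε hε d hd hdvd A hA σ hσ
end
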